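/- arXiv:1708.09373 — 3 statements merged into one kernel-verified Lean document; each statement's English description precedes it below -/
import Mathlib

section
/- Let K be a field, N ≥ 2 an integer, and α ∈ K. Suppose τ : ℤ → K satisfies τ_n ≠ 0 for all n and the bilinear equation τ_{n+N+2}τ_n = γ_n·τ_{n+N+1}τ_{n+1} + α·τ_{n+N}τ_{n+2} for all n ∈ ℤ, where the coefficient γ : ℤ → K is 2-periodic (γ_{n+2} = γ_n for all n). Define u_n := τ_{n+3}τ_n/(τ_{n+2}τ_{n+1}). Then the quantity β_n := α/(u_{n+1}u_{n+2}⋯u_{n+N−1}) − (u_n + u_{n+1} + … + u_{n+N}) is independent of n; consequently u satisfies the generalized DTKQ equation of order N with parameters α and β := β_0. -/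
/-!
Dividing the bilinear equation at `n` by `τ (n + N + 1) * τ (n + 1)` expresses `γ n` as a rational
function `G n` of `τ` (`bilinearCoeff`). The product `u (n + 1) ⋯ u (n + N - 1)` telescopes to
`τ (n + 1) * τ (n + N + 2) / (τ (n + 3) * τ (n + N))`, and with it a direct computation shows, for
every nowhere vanishing `τ`,
  `β (n + 1) - β n = τ (n + 3) * τ (n + N + 1) / (τ (n + 2) * τ (n + N + 2)) * (G n - G (n + 2))`.
So `β` is constant as soon as `γ = G` is 2-periodic, and the DTKQ equation is `β n = β 0` with the
denominator cleared.
-/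

open Finset

theorem sum_range_shift_one {M : Type*} [AddCommGroup M] (f : ℤ → M) (m : ℕ) (n : ℤ) :
    ∑ j ∈ range m, f (n + 1 + j) = ∑ j ∈ range m, f (n + j) + f (n + m) - f n := by
  have h := sum_range_succ' (fun j : ℕ => f (n + j)) m
  rw [sum_range_succ] at h
  push_cast at h
  simp only [add_zero, ← add_assoc, add_right_comm n _ 1] at h
  rw [h, add_sub_cancel_right]

section TauSubstitution

variable {K : Type*} [Field K]

def tauSubst (τ : ℤ → K) (n : ℤ) : K := τ (n + 3) * τ n / (τ (n + 2) * τ (n + 1))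

def bilinearCoeff (N : ℕ) (α : K) (τ : ℤ → K) (n : ℤ) : K :=
  (τ (n + N + 2) * τ n - α * (τ (n + N) * τ (n + 2))) / (τ (n + N + 1) * τ (n + 1))

def firstIntegral (N : ℕ) (α : K) (u : ℤ → K) (n : ℤ) : K :=
  α / (∏ k ∈ range (N - 1), u (n + k + 1)) - ∑ j ∈ range (N + 1), u (n + j)

variable {τ : ℤ → K} (hτ : ∀ n, τ n ≠ 0)
include hτ

theorem tauSubst_ne_zero (n : ℤ) : tauSubst τ n ≠ 0 := by
  unfold tauSubst
  exact div_ne_zero (mul_ne_zero (hτ _) (hτ _)) (mul_ne_zero (hτ _) (hτ _))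

theorem prod_tauSubst (m : ℕ) (n : ℤ) :
    ∏ k ∈ range m, tauSubst τ (n + k + 1) =
      τ (n + 1) * τ (n + m + 3) / (τ (n + 3) * τ (n + m + 1)) := by
  induction m with
  | zero => simp [div_self, mul_comm, hτ]
  | succ m ih =>
    rw [prod_range_succ, ih, tauSubst]
    push_cast
    field_simp [hτ]
    ring_nf

theorem firstIntegral_tauSubst (N : ℕ) (hN : 1 ≤ N) (α : K) (n : ℤ) :
    firstIntegral N α (tauSubst τ) n =
      α * (τ (n + 3) * τ (n + N)) / (τ (n + 1) * τ (n + N + 2)) -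
        ∑ j ∈ range (N + 1), tauSubst τ (n + j) := by
  rw [firstIntegral, prod_tauSubst hτ, Nat.cast_sub hN]
  push_cast
  field_simp [hτ]
  ring_nf

theorem firstIntegral_succ_sub (N : ℕ) (hN : 1 ≤ N) (α : K) (n : ℤ) :
    firstIntegral N α (tauSubst τ) (n + 1) - firstIntegral N α (tauSubst τ) n =
      τ (n + 3) * τ (n + N + 1) / (τ (n + 2) * τ (n + N + 2)) *
        (bilinearCoeff N α τ n - bilinearCoeff N α τ (n + 2)) := by
  rw [firstIntegral_tauSubst hτ N hN, firstIntegral_tauSubst hτ N hN, sum_range_shift_one]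
  simp only [tauSubst, bilinearCoeff]
  push_cast
  field_simp [hτ]
  ring_nf

theorem bilinearCoeff_eq {N : ℕ} {α c : K} {n : ℤ}
    (h : τ (n + N + 2) * τ n = c * (τ (n + N + 1) * τ (n + 1)) + α * (τ (n + N) * τ (n + 2))) :
    bilinearCoeff N α τ n = c := by
  rw [bilinearCoeff, div_eq_iff (mul_ne_zero (hτ _) (hτ _)), h]
  ring

theorem firstIntegral_periodic {N : ℕ} (hN : 1 ≤ N) {α : K}
    (hcoeff : Function.Periodic (bilinearCoeff N α τ) 2) :
    Function.Periodic (firstIntegral N α (tauSubst τ)) 1 := fun n =>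
  sub_eq_zero.mp (by rw [firstIntegral_succ_sub hτ N hN, hcoeff, sub_self, mul_zero])

end TauSubstitution

/-- conversely, the bilinear equation with 2-periodic coefficient `γ` has a
first integral `β` (independent of `n`), such that `u` given by the tau substitution
satisfies the generalized DTKQ equation of order `N` with parameters `α`, `β := B 0`. -/
theorem bilinear_gives_dtkq {K : Type*} [Field K] (N : ℕ) (hN : 2 ≤ N) (α : K)
    (τ : ℤ → K) (hτ : ∀ n, τ n ≠ 0)
    (γ : ℤ → K) (hper : ∀ n : ℤ, γ (n + 2) = γ n)
    (hbil : ∀ n : ℤ, τ (n + N + 2) * τ n =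
      γ n * (τ (n + N + 1) * τ (n + 1)) + α * (τ (n + N) * τ (n + 2)))
    (u : ℤ → K) (hu : ∀ n : ℤ, u n = τ (n + 3) * τ n / (τ (n + 2) * τ (n + 1)))
    (B : ℤ → K)
    (hB : ∀ n : ℤ, B n =
      α / (∏ k ∈ Finset.range (N - 1), u (n + k + 1)) -
        ∑ j ∈ Finset.range (N + 1), u (n + j)) :
    (∀ n : ℤ, B n = B 0) ∧
      (∀ n : ℤ, ((∑ j ∈ Finset.range (N + 1), u (n + j)) + B 0) *
        (∏ k ∈ Finset.range (N - 1), u (n + k + 1)) = α) := by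
  obtain rfl : u = tauSubst τ := funext hu
  obtain rfl : B = firstIntegral N α (tauSubst τ) := funext hB
  have hcoeff (n : ℤ) : bilinearCoeff N α τ n = γ n := bilinearCoeff_eq hτ (hbil n)
  have hconst (n : ℤ) : firstIntegral N α (tauSubst τ) n = firstIntegral N α (tauSubst τ) 0 := by
    have hperiodic := firstIntegral_periodic hτ (by omega : 1 ≤ N) fun n => by rw [hcoeff, hcoeff, hper]
    simpa using hperiodic.int_mul_eq n
  refine ⟨hconst, fun n => ?_⟩
  have hprod : ∏ k ∈ range (N - 1), tauSubst τ (n + k + 1) ≠ 0 :=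
    prod_ne_zero_iff.mpr fun k _ => tauSubst_ne_zero hτ _
  rw [← hconst n, firstIntegral]
  field_simp
  ring
end

section
/- Let K be a field, N ≥ 2 an integer, and α, β ∈ K. Suppose τ : ℤ → K satisfies τ_n ≠ 0 for all n and satisfies the multilinear equation τ_{n+N+3}·τ_{n+N}²·∏_{j=1}^{N−1} τ_{n+j} = α·τ_{n+3}·τ_{n+N}·∏_{j=2}^{N+1} τ_{n+j} − β·∏_{j=1}^{N+2} τ_{n+j} − τ_n·τ_{n+3}·∏_{j=3}^{N+2} τ_{n+j} − ∑_{k=1}^{N−1} τ_{n+k}·τ_{n+k+3}·∏_{j=1, j≠k+1, j≠k+2}^{N+2} τ_{n+j} for all n ∈ ℤ. Then the quantity γ_n := (τ_{n+N+2}τ_n − α·τ_{n+N}τ_{n+2})/(τ_{n+N+1}τ_{n+1}) is a 2-integral: γ_{n+2} = γ_n for all n ∈ ℤ. -/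
/-!
With `x m = tauRatio τ m = τ m τ (m+3) / (τ (m+1) τ (m+2))`, dividing the multilinear equation at `n` by
`∏_{j=1}^{N+2} τ (n+j)` turns it into the conservation-like law
`∑_{k=0}^{N} x (n+k) + β = α R n`, where `R n = τ (n+3) τ (n+N) / (τ (n+1) τ (n+N+2))`.
Subtracting this law from its shift by one telescopes to
`x (n+N+1) - α R (n+1) = x n - α R n`, and the two sides are the same nonzero multiple
`τ (n+3) τ (n+N+1) / (τ (n+2) τ (n+N+2))` of `γ (n+2)` and of `γ n`.
-/

open Finset

lemma sum_range_shift_sub {G : Type*} [AddCommGroup G] (f : ℤ → G) (n : ℤ) (m : ℕ) :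
    ∑ k ∈ range m, f (n + k + 1) - ∑ k ∈ range m, f (n + k) = f (n + m) - f n := by
  simpa only [Nat.cast_succ, Nat.cast_zero, add_zero, sum_sub_distrib, ← add_assoc] using
    sum_range_sub (fun k : ℕ => f (n + k)) m

section Laurent

variable {K : Type*} [Field K]

def tauRatio (τ : ℤ → K) (m : ℤ) : K := τ m * τ (m + 3) / (τ (m + 1) * τ (m + 2))

section Products

variable (τ : ℤ → K) (n : ℤ)

lemma prod_range_sub_one_mul_last_three {N : ℕ} (hN : 1 ≤ N) :
    (∏ j ∈ range (N - 1), τ (n + j + 1)) * (τ (n + N) * τ (n + N + 1) * τ (n + N + 2)) =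
      ∏ j ∈ range (N + 2), τ (n + j + 1) := by
  obtain ⟨M, rfl⟩ : ∃ M, N = M + 1 := ⟨N - 1, by omega⟩
  simp only [show M + 1 + 2 = M + 3 from rfl, prod_range_succ, Nat.add_sub_cancel]
  push_cast
  ring_nf

lemma first_mul_prod_range_mul_last (N : ℕ) :
    τ (n + 1) * (∏ j ∈ range N, τ (n + j + 2)) * τ (n + N + 2) =
      ∏ j ∈ range (N + 2), τ (n + j + 1) := by
  rw [prod_range_succ, prod_range_succ']
  push_cast
  ring_nf

lemma first_two_mul_prod_range (N : ℕ) :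
    τ (n + 1) * τ (n + 2) * ∏ j ∈ range N, τ (n + j + 3) =
      ∏ j ∈ range (N + 2), τ (n + j + 1) := by
  rw [prod_range_succ', prod_range_succ']
  push_cast
  ring_nf

lemma pair_mul_prod_Icc_erase_erase (N k : ℕ) (hk : k < N) :
    τ (n + k + 2) * τ (n + k + 3) * ∏ j ∈ ((Icc 1 (N + 2)).erase (k + 2)).erase (k + 3), τ (n + j) =
      ∏ j ∈ range (N + 2), τ (n + j + 1) := by
  have h2 : k + 2 ∈ Icc 1 (N + 2) := by simp only [mem_Icc]; omega
  have h3 : k + 3 ∈ (Icc 1 (N + 2)).erase (k + 2) := by simp only [mem_erase, mem_Icc]; omega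
  calc _ = ∏ j ∈ Icc 1 (N + 2), τ (n + j) := by
        rw [← mul_prod_erase _ _ h2, ← mul_prod_erase _ _ h3]
        push_cast
        ring_nf
    _ = _ := by
        rw [← Ico_add_one_right_eq_Icc, prod_Ico_eq_prod_range]
        push_cast
        ring_nf

end Products

lemma sum_tauRatio_add_eq_of_multilinear {N : ℕ} (hN : 1 ≤ N) (α β : K) (τ : ℤ → K)
    (hτ : ∀ n, τ n ≠ 0) (n : ℤ)
    (hmulti : τ (n + N + 3) * (τ (n + N)) ^ 2 * ∏ j ∈ range (N - 1), τ (n + j + 1) =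
        α * τ (n + 3) * τ (n + N) * ∏ j ∈ range N, τ (n + j + 2)
        - β * ∏ j ∈ range (N + 2), τ (n + j + 1)
        - τ n * τ (n + 3) * ∏ j ∈ range N, τ (n + j + 3)
        - ∑ k ∈ range (N - 1), τ (n + k + 1) * τ (n + k + 4) *
            ∏ j ∈ ((Icc 1 (N + 2)).erase (k + 2)).erase (k + 3), τ (n + j)) :
    ∑ k ∈ range (N + 1), tauRatio τ (n + k) + β =
      α * τ (n + 3) * τ (n + N) / (τ (n + 1) * τ (n + N + 2)) := by
  set P := ∏ j ∈ range (N + 2), τ (n + j + 1) with hPdef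
  have hP : P ≠ 0 := prod_ne_zero_iff.2 fun j _ => hτ _
  have first : tauRatio τ n * P = τ n * τ (n + 3) * ∏ j ∈ range N, τ (n + j + 3) := by
    rw [hPdef, ← first_two_mul_prod_range, tauRatio]
    field_simp [hτ]
  have last : tauRatio τ (n + N) * P =
      τ (n + N + 3) * (τ (n + N)) ^ 2 * ∏ j ∈ range (N - 1), τ (n + j + 1) := by
    rw [hPdef, ← prod_range_sub_one_mul_last_three τ n hN, tauRatio]
    field_simp [hτ]
  have middle : ∀ k ∈ range (N - 1), tauRatio τ (n + k + 1) * P =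
      τ (n + k + 1) * τ (n + k + 4) *
        ∏ j ∈ ((Icc 1 (N + 2)).erase (k + 2)).erase (k + 3), τ (n + j) := by
    intro k hk
    rw [hPdef, ← pair_mul_prod_Icc_erase_erase τ n N k (by rw [mem_range] at hk; omega), tauRatio]
    field_simp [hτ]
    ring_nf
  have rhs : α * τ (n + 3) * τ (n + N) / (τ (n + 1) * τ (n + N + 2)) * P =
      α * τ (n + 3) * τ (n + N) * ∏ j ∈ range N, τ (n + j + 2) := by
    rw [hPdef, ← first_mul_prod_range_mul_last]
    field_simp [hτ]
  apply mul_right_cancel₀ hP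
  rw [rhs, show N + 1 = N - 1 + 1 + 1 by omega, sum_range_succ, sum_range_succ',
    Nat.sub_add_cancel hN, add_mul, add_mul, add_mul, sum_mul]
  simp only [Nat.cast_add, Nat.cast_one, Nat.cast_zero, add_zero, ← add_assoc]
  rw [sum_congr rfl middle, first, last]
  linear_combination hmulti

lemma tauRatio_sub_eq_mul (τ : ℤ → K) (hτ : ∀ n, τ n ≠ 0) (α : K) (N n : ℤ) :
    tauRatio τ n - α * τ (n + 3) * τ (n + N) / (τ (n + 1) * τ (n + N + 2)) =
      τ (n + 3) * τ (n + N + 1) / (τ (n + 2) * τ (n + N + 2)) *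
        ((τ (n + N + 2) * τ n - α * (τ (n + N) * τ (n + 2))) / (τ (n + N + 1) * τ (n + 1))) := by
  rw [tauRatio]
  field_simp [hτ]

lemma tauRatio_shift_sub_eq_mul (τ : ℤ → K) (hτ : ∀ n, τ n ≠ 0) (α : K) (N n : ℤ) :
    tauRatio τ (n + N + 1) - α * τ (n + 4) * τ (n + N + 1) / (τ (n + 2) * τ (n + N + 3)) =
      τ (n + 3) * τ (n + N + 1) / (τ (n + 2) * τ (n + N + 2)) *
        ((τ (n + N + 4) * τ (n + 2) - α * (τ (n + N + 2) * τ (n + 4))) /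
          (τ (n + N + 3) * τ (n + 3))) := by
  rw [tauRatio]
  field_simp [hτ]
  ring_nf

end Laurent

/-- the quantity
`γ_n = (τ_{n+N+2}τ_n − α τ_{n+N}τ_{n+2})/(τ_{n+N+1}τ_{n+1})` is a 2-integral of the
multilinear (Laurentified DTKQ) equation. -/
theorem gamma_two_integral_of_multilinear {K : Type*} [Field K] (N : ℕ) (hN : 2 ≤ N)
    (α β : K)
    (τ : ℤ → K) (hτ : ∀ n, τ n ≠ 0)
    (hmulti : ∀ n : ℤ,
      τ (n + N + 3) * (τ (n + N)) ^ 2 * ∏ j ∈ Finset.range (N - 1), τ (n + j + 1) =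
        α * τ (n + 3) * τ (n + N) * ∏ j ∈ Finset.range N, τ (n + j + 2)
        - β * ∏ j ∈ Finset.range (N + 2), τ (n + j + 1)
        - τ n * τ (n + 3) * ∏ j ∈ Finset.range N, τ (n + j + 3)
        - ∑ k ∈ Finset.range (N - 1), τ (n + k + 1) * τ (n + k + 4) *
            ∏ j ∈ ((Finset.Icc 1 (N + 2)).erase (k + 2)).erase (k + 3), τ (n + j))
    (γ : ℤ → K)
    (hγ : ∀ n : ℤ, γ n =
      (τ (n + N + 2) * τ n - α * (τ (n + N) * τ (n + 2))) /
        (τ (n + N + 1) * τ (n + 1))) :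
    ∀ n : ℤ, γ (n + 2) = γ n := by
  intro n
  have hsum n := sum_tauRatio_add_eq_of_multilinear (by omega) α β τ hτ n (hmulti n)
  have hconserved :
      tauRatio τ (n + N + 1) - α * τ (n + 4) * τ (n + N + 1) / (τ (n + 2) * τ (n + N + 3)) =
        tauRatio τ n - α * τ (n + 3) * τ (n + N) / (τ (n + 1) * τ (n + N + 2)) := by
    have := sum_range_shift_sub (tauRatio τ) n (N + 1)
    rw [Nat.cast_succ] at this
    linear_combination (norm := ring_nf) hsum (n + 1) - hsum n - this
  rw [tauRatio_shift_sub_eq_mul τ hτ, tauRatio_sub_eq_mul τ hτ, mul_right_inj' (by simp [hτ])]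
    at hconserved
  rw [hγ, hγ, ← hconserved]
  ring_nf
end

section
/- Let K be a field, N ≥ 2 an EVEN integer, and α ∈ K. Suppose w : ℤ → K with w_n ≠ 0 for all n, and γ : ℤ → K with γ_{n+2} = γ_n for all n, satisfy the U-system w_{n+N}·w_n·∏_{j=1}^{N−1} (w_{n+j})² = γ_n·∏_{j=1}^{N−1} w_{n+j} + α for all n ∈ ℤ. Then the sequence u_n := w_n·w_{n+1} satisfies the lifted DTKQ equation of order N+1 with parameter α for all n ∈ ℤ. (This expresses the commutativity φ ∘ π₁ = π₁ ∘ ψ of the upper square in the diagram of Theorem: the map π₁ sends orbits of the U-system map ψ to orbits of the lifted DTKQ map φ.) -/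
/-!
Write `P_k = windowProd w (N-1) k = ∏_{j=1}^{N-1} w_{k+j}` and `Q_k = windowProd u (N-1) k`.
Since `u_i = w_i w_{i+1}`, `Q_k = P_k P_{k+1}`, and telescoping turns the U-system at `k` into `u_k Q_k = γ_k P_k + α`.
Hence `u_n = γ_n / P_{n+1} + α / Q_n`; the same relation at `n + 2`, shifted back by one window
and combined with `γ_{n+2} = γ_n`, gives `u_{n+N+1} = γ_n / P_{n+1} + α / Q_{n+1}`.
Subtracting the two is the lifted DTKQ equation.
-/

open Finset

def windowProd {M : Type*} [CommMonoid M] (f : ℤ → M) (m : ℕ) (k : ℤ) : M :=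
  ∏ j ∈ range m, f (k + j + 1)

section CommMonoid

variable {M : Type*} [CommMonoid M] (f : ℤ → M) (m : ℕ) (k : ℤ)

lemma mul_windowProd_succ :
    f (k + 1) * windowProd f m (k + 1) = windowProd f m k * f (k + m + 1) := by
  have h := prod_range_succ' (fun j : ℕ => f (k + j + 1)) m
  rw [prod_range_succ] at h
  simp only [windowProd, h, Nat.cast_add, Nat.cast_one, Nat.cast_zero]
  rw [mul_comm]
  congr 2 <;> ring_nf

lemma windowProd_mul_succ :
    windowProd (fun i => f i * f (i + 1)) m k = windowProd f m k * windowProd f m (k + 1) := by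
  simp only [windowProd, ← prod_mul_distrib, add_right_comm _ (1 : ℤ)]

end CommMonoid

lemma windowProd_ne_zero {M₀ : Type*} [CommMonoidWithZero M₀] [NoZeroDivisors M₀] [Nontrivial M₀]
    {f : ℤ → M₀} (hf : ∀ k, f k ≠ 0) (m : ℕ) (k : ℤ) : windowProd f m k ≠ 0 :=
  prod_ne_zero_iff.mpr fun _ _ => hf _

lemma mul_succ_mul_windowProd_eq_of_usystem {R : Type*} [CommRing R] {w γ : ℤ → R} {α : R} {m : ℕ} {k : ℤ}
    (h : w (k + m + 1) * w k * windowProd w m k ^ 2 = γ k * windowProd w m k + α) :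
    w k * w (k + 1) * windowProd (fun i => w i * w (i + 1)) m k = γ k * windowProd w m k + α := by
  rw [windowProd_mul_succ]
  linear_combination h + w k * windowProd w m k * mul_windowProd_succ w m k

theorem lifted_dtkq_of_factorization {K : Type*} [Field K] {u P γ : ℤ → K} {α : K} {m : ℕ}
    (hP : ∀ k, P k ≠ 0) (hγ : ∀ k, γ (k + 2) = γ k)
    (hQ : ∀ k, windowProd u m k = P k * P (k + 1))
    (hu : ∀ k, u k * windowProd u m k = γ k * P k + α) (n : ℤ) :
    u (n + m + 2) - u n + α * (1 / windowProd u m n - 1 / windowProd u m (n + 1)) = 0 := by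
  have h₀ := hu n
  have h₂ : windowProd u m (n + 1) * u (n + m + 2) = γ n * P (n + 2) + α := by
    rw [← hγ n, ← hu (n + 2)]
    convert (mul_windowProd_succ u m (n + 1)).symm using 2 <;> ring_nf
  rw [hQ n] at h₀ ⊢
  rw [hQ (n + 1), show n + 1 + 1 = n + 2 by ring] at h₂ ⊢
  have := hP n; have := hP (n + 1); have := hP (n + 2)
  field_simp
  linear_combination P n * h₂ - P (n + 2) * h₀

theorem usystem_even_to_lifted_dtkq_general {K : Type*} [Field K] (N : ℕ) (hN : 2 ≤ N)
    (α : K)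
    (w : ℤ → K) (hw : ∀ n, w n ≠ 0)
    (γ : ℤ → K) (hper : ∀ n : ℤ, γ (n + 2) = γ n)
    (hUsys : ∀ n : ℤ,
      w (n + N) * w n * ∏ j ∈ Finset.range (N - 1), (w (n + j + 1)) ^ 2 =
        γ n * ∏ j ∈ Finset.range (N - 1), w (n + j + 1) + α)
    (u : ℤ → K) (hu : ∀ n : ℤ, u n = w n * w (n + 1)) :
    ∀ n : ℤ,
      u (n + N + 1) - u n +
        α * (1 / ∏ j ∈ Finset.range (N - 1), u (n + j + 1) -
          1 / ∏ j ∈ Finset.range (N - 1), u (n + j + 2)) = 0 := by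
  obtain ⟨m, rfl⟩ : ∃ m, N = m + 1 := ⟨N - 1, by omega⟩
  obtain rfl : u = fun k => w k * w (k + 1) := funext hu
  intro n
  have hUsys' (k : ℤ) : w (k + m + 1) * w k * windowProd w m k ^ 2 =
      γ k * windowProd w m k + α := by
    simpa [windowProd, prod_pow, add_assoc] using hUsys k
  convert lifted_dtkq_of_factorization (windowProd_ne_zero hw m) hper
    (windowProd_mul_succ w m) (fun k => mul_succ_mul_windowProd_eq_of_usystem (hUsys' k)) n using 3
  all_goals simp only [Nat.add_sub_cancel, windowProd]; push_cast; ring_nf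

/-- for even `N`, if `w` and 2-periodic `γ` satisfy the U-system
`w_{n+N} w_n ∏_{j=1}^{N-1} w_{n+j}² = γ_n ∏_{j=1}^{N-1} w_{n+j} + α`, then
`u_n = w_n w_{n+1}` satisfies the lifted DTKQ equation of order `N+1`. -/
theorem usystem_even_to_lifted_dtkq {K : Type*} [Field K] (N : ℕ) (hN : 2 ≤ N)
    (hNeven : Even N) (α : K)
    (w : ℤ → K) (hw : ∀ n, w n ≠ 0)
    (γ : ℤ → K) (hper : ∀ n : ℤ, γ (n + 2) = γ n)
    (hUsys : ∀ n : ℤ,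
      w (n + N) * w n * ∏ j ∈ Finset.range (N - 1), (w (n + j + 1)) ^ 2 =
        γ n * ∏ j ∈ Finset.range (N - 1), w (n + j + 1) + α)
    (u : ℤ → K) (hu : ∀ n : ℤ, u n = w n * w (n + 1)) :
    ∀ n : ℤ,
      u (n + N + 1) - u n +
        α * (1 / ∏ j ∈ Finset.range (N - 1), u (n + j + 1) -
          1 / ∏ j ∈ Finset.range (N - 1), u (n + j + 2)) = 0 :=
  usystem_even_to_lifted_dtkq_general N hN α w hw γ hper hUsys u hu
end
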